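/- arXiv:1703.02361 — 5 statements merged into one kernel-verified Lean document; each statement's English description precedes it below -/
import Mathlib

section
/- Let U₀, U₁, ..., U_{2k} (k ≥ 1) be pairwise distinct subsets of a finite set J, all containing a fixed element j₀ ∈ J. Then there exists t with 2 ≤ t ≤ 2k such that the set S = U₀ △ U₁ △ U_t is distinct from every U_p and from every complement J \ U_p, for 0 ≤ p ≤ 2k. -/
/-- Let `U₀, U₁, …, U_{2k}` (`k ≥ 1`) be pairwise distinct subsets of a finite set `J`,
all containing a fixed element `j₀ ∈ J`. Then there exists `t` with `2 ≤ t ≤ 2k` such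
that `S = U₀ △ U₁ △ Uₜ` is distinct from every `U_p` and from every complement
`J \ U_p`, `0 ≤ p ≤ 2k`. -/
theorem exists_good_triple_symmDiff {α : Type*} [DecidableEq α]
    (k : ℕ) (hk : 1 ≤ k) (J : Finset α) (j₀ : α) (hj₀ : j₀ ∈ J)
    (U : ℕ → Finset α)
    (hsub : ∀ i ≤ 2 * k, U i ⊆ J)
    (hmem : ∀ i ≤ 2 * k, j₀ ∈ U i)
    (hdist : ∀ i ≤ 2 * k, ∀ j ≤ 2 * k, i ≠ j → U i ≠ U j) :
    ∃ t, 2 ≤ t ∧ t ≤ 2 * k ∧ ∀ p ≤ 2 * k,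
      symmDiff (symmDiff (U 0) (U 1)) (U t) ≠ U p ∧
      symmDiff (symmDiff (U 0) (U 1)) (U t) ≠ J \ U p := by
  classical
  set D : Finset α := symmDiff (U 0) (U 1) with hD
  have huniq : ∀ i ≤ 2 * k, ∀ j ≤ 2 * k, U i = U j → i = j := by
    intro i hi j hj hij
    by_contra hne
    exact hdist i hi j hj hne hij
  have hk0 : (0 : ℕ) ≤ 2 * k := by omega
  have hk1 : (1 : ℕ) ≤ 2 * k := by omega
  have hDne : D ≠ ⊥ := by
    rw [hD, Ne, symmDiff_eq_bot]
    exact hdist 0 hk0 1 hk1 (by omega)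
  have hj₀D : j₀ ∉ D := by
    simp only [hD, Finset.mem_symmDiff]
    have h0 := hmem 0 hk0
    have h1 := hmem 1 hk1
    tauto
  -- the complement alternative never happens
  have hcompl : ∀ t ≤ 2 * k, ∀ p ≤ 2 * k, symmDiff D (U t) ≠ J \ U p := by
    intro t ht p hp heq
    have hjS : j₀ ∈ symmDiff D (U t) := by
      rw [Finset.mem_symmDiff]
      exact Or.inr ⟨hmem t ht, hj₀D⟩
    rw [heq, Finset.mem_sdiff] at hjS
    exact hjS.2 (hmem p hp)
  by_contra hcon
  push_neg at hcon
  -- every t in [2, 2k] is "bad": symmDiff D (U t) = U p for some p ≤ 2k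
  have hbad : ∀ t ∈ Finset.Icc 2 (2 * k), ∃ p, p ≤ 2 * k ∧ symmDiff D (U t) = U p := by
    intro t ht
    rw [Finset.mem_Icc] at ht
    obtain ⟨p, hp, hcase⟩ := hcon t ht.1 ht.2
    by_cases h : symmDiff D (U t) = U p
    · exact ⟨p, hp, h⟩
    · exact absurd (hcase h) (hcompl t ht.2 p hp)
  choose g hgle hgeq using hbad
  have hIcc : ∀ t, t ∈ Finset.Icc 2 (2 * k) → 2 ≤ t ∧ t ≤ 2 * k := by
    intro t ht; rwa [Finset.mem_Icc] at ht
  have hcancel : ∀ t ht, symmDiff D (U (g t ht)) = U t := by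
    intro t ht
    rw [← hgeq t ht, symmDiff_symmDiff_cancel_left]
  have hgmem : ∀ t ht, g t ht ∈ Finset.Icc 2 (2 * k) := by
    intro t ht
    have h2 := hIcc t ht
    rw [Finset.mem_Icc]
    refine ⟨?_, hgle t ht⟩
    by_contra hlt
    push_neg at hlt
    interval_cases h : g t ht
    · -- g t = 0 : then U t = D △ U 0 = U 1
      have hU : U t = U 1 := by
        have := hcancel t ht
        rw [h] at this
        rw [← this, hD, symmDiff_comm (U 0) (U 1), symmDiff_symmDiff_cancel_right]
      exact absurd (huniq t h2.2 1 hk1 hU) (by omega)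
    · have hU : U t = U 0 := by
        have := hcancel t ht
        rw [h] at this
        rw [← this, hD, symmDiff_symmDiff_cancel_right]
      exact absurd (huniq t h2.2 0 hk0 hU) (by omega)
  have hgne : ∀ t ht, g t ht ≠ t := by
    intro t ht hEq
    have h2 := hIcc t ht
    have := hgeq t ht
    rw [hEq] at this
    have hDbot : D = ⊥ := by
      calc D = symmDiff (symmDiff D (U t)) (U t) :=
              (symmDiff_symmDiff_cancel_right _ _).symm
        _ = symmDiff (U t) (U t) := by rw [this]
        _ = ⊥ := symmDiff_self _
    exact hDne hDbot
  have hgg : ∀ t ht, g (g t ht) (hgmem t ht) = t := by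
    intro t ht
    have h2 := hIcc t ht
    have hq := hgeq (g t ht) (hgmem t ht)
    rw [hcancel t ht] at hq
    exact huniq _ (hgle _ _) t h2.2 hq.symm
  -- parity contradiction
  have hprod : ∏ _x ∈ Finset.Icc 2 (2 * k), (-1 : ℤ) = 1 := by
    refine Finset.prod_involution g ?_ ?_ hgmem hgg
    · intro a ha; ring
    · intro a ha _; exact hgne a ha
  rw [Finset.prod_const] at hprod
  have hcard : (Finset.Icc 2 (2 * k)).card = 2 * k - 1 := by
    rw [Nat.card_Icc]; omega
  rw [hcard] at hprod
  have heven : Even (2 * k - 1) := by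
    rcases Nat.even_or_odd (2 * k - 1) with h | h
    · exact h
    · rw [h.neg_one_pow] at hprod; norm_num at hprod
  obtain ⟨m, hm⟩ := heven
  omega
end

section
/- Let NPadj(A) ⊆ {0,1}^{3n+3} be the set of 0/1 vectors with coordinates (y₁, y₂, y₃, (x_j, x̄_j, x'_j)_{j∈[n]}) satisfying x_j + x̄_j = 1 and y₁ + y₂ + x'_j + x̄_j = 2 for each j ∈ [n], and y₃ + x_i + x'_j + x'_k = 2 for each row {i,j,k} of A. Then exactly one point of NPadj(A) satisfies y₁ = y₂ = 0, namely the point x⁰ with y₃ = x_j = 0 and x'_j = x̄_j = 1 for all j. -/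
/-- The set `NPadj(A) ⊆ {0,1}^{3n+3}`: coordinates are `y₁, y₂, y₃` (indexed by
`Sum.inl 0, Sum.inl 1, Sum.inl 2`) and, for each `j ∈ [n]`, `x_j, x̄_j, x'_j`
(indexed by `Sum.inr (j, 0), Sum.inr (j, 1), Sum.inr (j, 2)`), subject to
`x_j + x̄_j = 1`, `y₁ + y₂ + x'_j + x̄_j = 2`, and, for each row `{i,j,k}` of `A`,
`y₃ + x_i + x'_j + x'_k = 2`. -/
def NPadj (n m : ℕ) (rows : Fin m → Fin n × Fin n × Fin n) :
    Set ((Fin 3 ⊕ Fin n × Fin 3) → ℤ) :=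
  {x | (∀ c, x c = 0 ∨ x c = 1) ∧
    (∀ j : Fin n, x (Sum.inr (j, 0)) + x (Sum.inr (j, 1)) = 1) ∧
    (∀ j : Fin n, x (Sum.inl 0) + x (Sum.inl 1) + x (Sum.inr (j, 2)) + x (Sum.inr (j, 1)) = 2) ∧
    (∀ r : Fin m, x (Sum.inl 2) + x (Sum.inr ((rows r).1, 0)) +
      x (Sum.inr ((rows r).2.1, 2)) + x (Sum.inr ((rows r).2.2, 2)) = 2)}

/-- Exactly one point of `NPadj(A)` satisfies `y₁ = y₂ = 0`, namely the point `x⁰`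
with `y₃ = x_j = 0` and `x'_j = x̄_j = 1` for all `j`. -/
theorem NPadj_y1_y2_zero_unique {n m : ℕ} (hm : 0 < m)
    (rows : Fin m → Fin n × Fin n × Fin n)
    (hrows : ∀ r, (rows r).1 ≠ (rows r).2.1 ∧ (rows r).1 ≠ (rows r).2.2 ∧
      (rows r).2.1 ≠ (rows r).2.2) :
    {x ∈ NPadj n m rows | x (Sum.inl 0) = 0 ∧ x (Sum.inl 1) = 0} =
      {Sum.elim (fun _ => (0 : ℤ)) (fun jc => if jc.2 = 0 then 0 else 1)} := by

  ext x
  simp only [Set.mem_setOf_eq, Set.mem_singleton_iff]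
  constructor
  · rintro ⟨⟨hbin, h1, h2, h3⟩, hy1, hy2⟩
    have hbar : ∀ j : Fin n, x (Sum.inr (j, 1)) = 1 := by
      intro j
      have := h2 j
      rw [hy1, hy2] at this
      rcases hbin (Sum.inr (j, 2)) with h | h <;> rcases hbin (Sum.inr (j, 1)) with h' | h' <;> omega
    have hx' : ∀ j : Fin n, x (Sum.inr (j, 2)) = 1 := by
      intro j
      have := h2 j
      rw [hy1, hy2, hbar j] at this
      omega
    have hx0 : ∀ j : Fin n, x (Sum.inr (j, 0)) = 0 := by
      intro j
      have := h1 j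
      rw [hbar j] at this
      omega
    have hy3 : x (Sum.inl 2) = 0 := by
      have := h3 ⟨0, hm⟩
      rw [hx0 _, hx' _, hx' _] at this
      omega
    funext c
    match c with
    | Sum.inl 0 => simpa using hy1
    | Sum.inl 1 => simpa using hy2
    | Sum.inl 2 => simpa using hy3
    | Sum.inr (j, 0) => simpa using hx0 j
    | Sum.inr (j, 1) => simpa using hbar j
    | Sum.inr (j, 2) => simpa using hx' j
  · rintro rfl
    refine ⟨⟨?_, ?_, ?_, ?_⟩, by simp, by simp⟩
    · rintro (i | ⟨j, c⟩)
      · simp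
      · fin_cases c <;> simp
    · intro j; simp
    · intro j; simp
    · intro r; simp
end

section
/- With NPadj(A) as defined and F₁ = {x ∈ NPadj(A) : y₁ = 0, y₂ = 1, y₃ = 1}, the map sending z ∈ Part(A) = {z ∈ {0,1}^n : Az = 1} to the point with y₁ = 0, y₂ = 1, y₃ = 1, x_j = z_j, x̄_j = 1 - z_j, x'_j = z_j is a bijection from Part(A) onto F₁. -/
/-- The map `z ↦ (y₁, y₂, y₃, x_j, x̄_j, x'_j) = (0, 1, 1, z_j, 1 - z_j, z_j)` is a
bijection from `Part(A) = {z ∈ {0,1}ⁿ : Az = 1}` onto the face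
`F₁ = {x ∈ NPadj(A) : y₁ = 0, y₂ = 1, y₃ = 1}`. -/
theorem part_bijOn_F1 {n m : ℕ} (rows : Fin m → Fin n × Fin n × Fin n)
    (Part : Set (Fin n → ℤ))
    (hPart : Part = {z | (∀ j, z j = 0 ∨ z j = 1) ∧
      ∀ r : Fin m, z (rows r).1 + z (rows r).2.1 + z (rows r).2.2 = 1})
    (F₁ : Set ((Fin 3 ⊕ Fin n × Fin 3) → ℤ))
    (hF₁ : F₁ = {x ∈ NPadj n m rows |
      x (Sum.inl 0) = 0 ∧ x (Sum.inl 1) = 1 ∧ x (Sum.inl 2) = 1})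
    (φ : (Fin n → ℤ) → ((Fin 3 ⊕ Fin n × Fin 3) → ℤ))
    (hφ : φ = fun z => Sum.elim ![0, 1, 1]
      (fun jc => if jc.2 = 1 then 1 - z jc.1 else z jc.1)) :
    Set.BijOn φ Part F₁ := by
  subst hPart hF₁ hφ
  constructor
  · rintro z ⟨hz01, hzrow⟩
    refine ⟨⟨?_, ?_, ?_, ?_⟩, by simp, by simp, by simp⟩
    · rintro (c | ⟨j, c⟩)
      · fin_cases c <;> simp
      · rcases hz01 j with h | h <;> by_cases hc : c = 1 <;> simp [hc, h]
    · intro j; simp [add_comm]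
    · intro j; simp
    · intro r; simp; linarith [hzrow r]
  constructor
  · intro z₁ _ z₂ _ h
    funext j
    have := congrFun h (Sum.inr (j, 0))
    simpa using this
  · rintro x ⟨⟨h01, h1, h2, h3⟩, hy1, hy2, hy3⟩
    refine ⟨fun j => x (Sum.inr (j, 0)), ⟨fun j => h01 _, ?_⟩, ?_⟩
    · intro r
      have e2 : ∀ j : Fin n, x (Sum.inr (j, 2)) = x (Sum.inr (j, 0)) := by
        intro j
        have := h1 j
        have := h2 j
        rw [hy1, hy2] at *
        linarith
      have := h3 r
      rw [hy3, e2, e2] at this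
      linarith
    · funext c
      rcases c with c | ⟨j, c⟩
      · fin_cases c <;> simp [hy1, hy2, hy3]
      · have := h1 j
        have e2 := h2 j
        rw [hy1, hy2] at e2
        fin_cases c <;> simp <;> linarith
end

section
/- With NPadj(A) as defined, every point of NPadj(A) is one of: the point x⁰ (with y₁=y₂=0), its complement 1 - x⁰ (with y₁=y₂=1), or belongs to exactly one of the four sets F₁, F₂, F₃, F₄ determined by the four assignments (y₁,y₂,y₃) ∈ {(0,1,1),(1,0,1),(0,1,0),(1,0,0)}. In particular NPadj(A) is the disjoint union of these six sets. -/
/-- `NPadj(A)` is the disjoint union of `{x⁰}`, `{1 - x⁰}` and the four faces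
`F₁, F₂, F₃, F₄` determined by the assignments
`(y₁, y₂, y₃) ∈ {(0,1,1), (1,0,1), (0,1,0), (1,0,0)}`. -/
theorem NPadj_partition {n m : ℕ} (hm : 0 < m)
    (rows : Fin m → Fin n × Fin n × Fin n)
    (x0 : (Fin 3 ⊕ Fin n × Fin 3) → ℤ)
    (hx0 : x0 = Sum.elim (fun _ => (0 : ℤ)) (fun jc => if jc.2 = 0 then 0 else 1))
    (xbar0 : (Fin 3 ⊕ Fin n × Fin 3) → ℤ) (hxbar0 : xbar0 = fun c => 1 - x0 c)
    (F : Fin 6 → Set ((Fin 3 ⊕ Fin n × Fin 3) → ℤ))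
    (hF : F = ![{x0}, {xbar0},
      {x ∈ NPadj n m rows | x (Sum.inl 0) = 0 ∧ x (Sum.inl 1) = 1 ∧ x (Sum.inl 2) = 1},
      {x ∈ NPadj n m rows | x (Sum.inl 0) = 1 ∧ x (Sum.inl 1) = 0 ∧ x (Sum.inl 2) = 1},
      {x ∈ NPadj n m rows | x (Sum.inl 0) = 0 ∧ x (Sum.inl 1) = 1 ∧ x (Sum.inl 2) = 0},
      {x ∈ NPadj n m rows | x (Sum.inl 0) = 1 ∧ x (Sum.inl 1) = 0 ∧ x (Sum.inl 2) = 0}]) :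
    NPadj n m rows = F 0 ∪ F 1 ∪ F 2 ∪ F 3 ∪ F 4 ∪ F 5 ∧
    ∀ i j : Fin 6, i ≠ j → Disjoint (F i) (F j) := by
  subst hx0 hxbar0 hF
  -- membership facts for x0 and xbar0
  have hx0mem : (Sum.elim (fun _ => (0 : ℤ)) (fun jc => if jc.2 = 0 then 0 else 1)) ∈ NPadj n m rows := by
    refine ⟨?_, ?_, ?_, ?_⟩
    · rintro (i | ⟨j, c⟩)
      · simp
      · fin_cases c <;> simp
    · intro j; simp
    · intro j; simp
    · intro r; simp
  have hxbmem : (fun c => 1 - (Sum.elim (fun _ => (0 : ℤ)) (fun jc => if jc.2 = 0 then 0 else 1)) c) ∈ NPadj n m rows := by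
    refine ⟨?_, ?_, ?_, ?_⟩
    · rintro (i | ⟨j, c⟩)
      · simp
      · fin_cases c <;> simp
    · intro j; simp
    · intro j; simp
    · intro r; simp
  constructor
  · apply Set.Subset.antisymm
    · intro x hx
      obtain ⟨h01, h1, h2, h3⟩ := hx
      have hj : ∀ j : Fin n,
          (x (Sum.inr (j, 0)) = 0 ∨ x (Sum.inr (j, 0)) = 1) ∧
          (x (Sum.inr (j, 1)) = 0 ∨ x (Sum.inr (j, 1)) = 1) ∧
          (x (Sum.inr (j, 2)) = 0 ∨ x (Sum.inr (j, 2)) = 1) :=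
        fun j => ⟨h01 _, h01 _, h01 _⟩
      have r0 := h3 ⟨0, hm⟩
      rcases h01 (Sum.inl 0) with hy1 | hy1 <;> rcases h01 (Sum.inl 1) with hy2 | hy2
      · -- y1 = 0, y2 = 0 : x = x0
        have hcoord : ∀ j : Fin n, x (Sum.inr (j, 0)) = 0 ∧ x (Sum.inr (j, 1)) = 1 ∧
            x (Sum.inr (j, 2)) = 1 := by
          intro j
          have := h1 j; have := h2 j; have := hj j
          omega
        have hy3 : x (Sum.inl 2) = 0 := by
          have a := hcoord (rows ⟨0, hm⟩).1
          have b := hcoord (rows ⟨0, hm⟩).2.1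
          have c := hcoord (rows ⟨0, hm⟩).2.2
          omega
        refine Or.inl (Or.inl (Or.inl (Or.inl (Or.inl ?_))))
        show x ∈ ({_} : Set _)
        rw [Set.mem_singleton_iff]
        funext c
        rcases c with i | ⟨j, c⟩
        · fin_cases i <;> simpa using by assumption
        · fin_cases c
          · simpa using (hcoord j).1
          · simpa using (hcoord j).2.1
          · simpa using (hcoord j).2.2
      · -- y1 = 0, y2 = 1 : F2 or F4
        rcases h01 (Sum.inl 2) with hy3 | hy3
        · exact Or.inl (Or.inr ⟨⟨h01, h1, h2, h3⟩, hy1, hy2, hy3⟩)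
        · exact Or.inl (Or.inl (Or.inl (Or.inr ⟨⟨h01, h1, h2, h3⟩, hy1, hy2, hy3⟩)))
      · -- y1 = 1, y2 = 0 : F3 or F5
        rcases h01 (Sum.inl 2) with hy3 | hy3
        · exact Or.inr ⟨⟨h01, h1, h2, h3⟩, hy1, hy2, hy3⟩
        · exact Or.inl (Or.inl (Or.inr ⟨⟨h01, h1, h2, h3⟩, hy1, hy2, hy3⟩))
      · -- y1 = 1, y2 = 1 : x = xbar0
        have hcoord : ∀ j : Fin n, x (Sum.inr (j, 0)) = 1 ∧ x (Sum.inr (j, 1)) = 0 ∧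
            x (Sum.inr (j, 2)) = 0 := by
          intro j
          have := h1 j; have := h2 j; have := hj j
          omega
        have hy3 : x (Sum.inl 2) = 1 := by
          have a := hcoord (rows ⟨0, hm⟩).1
          have b := hcoord (rows ⟨0, hm⟩).2.1
          have c := hcoord (rows ⟨0, hm⟩).2.2
          omega
        refine Or.inl (Or.inl (Or.inl (Or.inl (Or.inr ?_))))
        show x ∈ ({_} : Set _)
        rw [Set.mem_singleton_iff]
        funext c
        rcases c with i | ⟨j, c⟩
        · fin_cases i <;> simp_all
        · fin_cases c <;> simp [(hcoord j).1, (hcoord j).2.1, (hcoord j).2.2]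
    · -- ⊇
      intro x hx
      simp only [Matrix.cons_val_zero, Matrix.cons_val_one, Matrix.head_cons,
        Matrix.cons_val_succ] at hx
      rcases hx with ((((hx | hx) | hx) | hx) | hx) | hx
      · rw [Set.mem_singleton_iff] at hx; subst hx; exact hx0mem
      · rw [Set.mem_singleton_iff] at hx; subst hx; exact hxbmem
      · exact hx.1
      · exact hx.1
      · exact hx.1
      · exact hx.1
  · -- disjointness
    have key : ∀ (i : Fin 6) (x : (Fin 3 ⊕ Fin n × Fin 3) → ℤ),
        x ∈ (![{Sum.elim (fun _ => (0:ℤ)) (fun jc => if jc.2 = 0 then 0 else 1)},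
          {fun c => 1 - (Sum.elim (fun _ => (0:ℤ)) (fun jc => if jc.2 = 0 then 0 else 1)) c},
          {x ∈ NPadj n m rows | x (Sum.inl 0) = 0 ∧ x (Sum.inl 1) = 1 ∧ x (Sum.inl 2) = 1},
          {x ∈ NPadj n m rows | x (Sum.inl 0) = 1 ∧ x (Sum.inl 1) = 0 ∧ x (Sum.inl 2) = 1},
          {x ∈ NPadj n m rows | x (Sum.inl 0) = 0 ∧ x (Sum.inl 1) = 1 ∧ x (Sum.inl 2) = 0},
          {x ∈ NPadj n m rows | x (Sum.inl 0) = 1 ∧ x (Sum.inl 1) = 0 ∧ x (Sum.inl 2) = 0}] :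
            Fin 6 → Set _) i →
        (x (Sum.inl 0), x (Sum.inl 1), x (Sum.inl 2)) =
          ![((0:ℤ),(0:ℤ),(0:ℤ)), (1,1,1), (0,1,1), (1,0,1), (0,1,0), (1,0,0)] i := by
      intro i x hx
      fin_cases i <;>
        simp only [Matrix.cons_val_zero, Matrix.cons_val_one, Matrix.head_cons,
          Set.mem_singleton_iff, Set.mem_setOf_eq, Fin.mk_one, Fin.isValue,
          Matrix.cons_val_succ] at hx ⊢
      · subst hx; simp
      · subst hx; simp
      · exact Prod.ext hx.2.1 (Prod.ext hx.2.2.1 hx.2.2.2)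
      · exact Prod.ext hx.2.1 (Prod.ext hx.2.2.1 hx.2.2.2)
      · exact Prod.ext hx.2.1 (Prod.ext hx.2.2.1 hx.2.2.2)
      · exact Prod.ext hx.2.1 (Prod.ext hx.2.2.1 hx.2.2.2)
    have vinj : ∀ i j : Fin 6,
        (![((0:ℤ),(0:ℤ),(0:ℤ)), (1,1,1), (0,1,1), (1,0,1), (0,1,0), (1,0,0)] :
          Fin 6 → ℤ × ℤ × ℤ) i =
        ![((0:ℤ),(0:ℤ),(0:ℤ)), (1,1,1), (0,1,1), (1,0,1), (0,1,0), (1,0,0)] j → i = j := by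
      decide
    intro i j hij
    rw [Set.disjoint_left]
    intro x hxi hxj
    have hi := key i x hxi
    have hj := key j x hxj
    exact hij (vinj i j (hi.symm.trans hj))
end

section
/- Let G = (V,E) be a graph and suppose H = {y⁰, ȳ⁰, y¹, ȳ¹, ..., y^{2k}, ȳ^{2k}} ⊆ Stable(G) is a set of 2(2k+1) distinct 0/1-vectors with k ≥ 1 satisfying y⁰ + ȳ⁰ = yⁱ + ȳⁱ for all i. Then there exist y*, ȳ* ∈ Stable(G) \ H with y* + ȳ* = y⁰ + ȳ⁰. Consequently H is not the vertex set of a face of the stable set polytope conv(Stable(G)). -/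
open Finset

/-! ### Auxiliary scalar definitions and lemmas -/

open Classical in
/-- The bit (in `ZMod 2`) of a real number: `1` if the number is `1`, else `0`. -/
noncomputable def matsuiRbit (a : ℝ) : ZMod 2 := if a = 1 then 1 else 0

/-- The real number associated to a bit in `ZMod 2`. -/
noncomputable def matsuiZreal (b : ZMod 2) : ℝ := if b = 1 then 1 else 0

lemma matsuiZreal_cases (b : ZMod 2) : matsuiZreal b = 0 ∨ matsuiZreal b = 1 := by
  unfold matsuiZreal; split <;> simp

lemma matsuiRbit_zero {a : ℝ} (h : a = 0) : matsuiRbit a = 0 := by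
  unfold matsuiRbit
  rw [if_neg]; rw [h]; norm_num

lemma matsuiRbit_one {a : ℝ} (h : a = 1) : matsuiRbit a = 1 := by
  unfold matsuiRbit; rw [if_pos h]

lemma matsuiZreal_zero : matsuiZreal 0 = 0 := by
  unfold matsuiZreal; rw [if_neg (by decide)]

lemma matsuiZreal_one : matsuiZreal 1 = 1 := by
  unfold matsuiZreal; rw [if_pos rfl]

lemma matsuiZreal_rbit {a : ℝ} (h : a = 0 ∨ a = 1) : matsuiZreal (matsuiRbit a) = a := by
  rcases h with h | h
  · rw [matsuiRbit_zero h, matsuiZreal_zero, h]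
  · rw [matsuiRbit_one h, matsuiZreal_one, h]

lemma matsuiRbit_zreal (b : ZMod 2) : matsuiRbit (matsuiZreal b) = b := by
  have hb : b = 0 ∨ b = 1 := by revert b; decide
  rcases hb with h | h <;> subst h
  · rw [matsuiZreal_zero, matsuiRbit_zero rfl]
  · rw [matsuiZreal_one, matsuiRbit_one rfl]

/-- The trichotomy for the "sum" value at a vertex. -/
lemma matsui_tval {a t : ℝ} (e : a = 0 ∨ a = 1) (q : t - a = 0 ∨ t - a = 1) :
    t = 0 ∨ t = 1 ∨ t = 2 := by
  rcases e with h | h <;> rcases q with h' | h' <;>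
    first
      | (left; linarith)
      | (right; left; linarith)
      | (right; right; linarith)

lemma matsui_zero_of_zero {a t : ℝ} (e : a = 0 ∨ a = 1) (q : t - a = 0 ∨ t - a = 1)
    (h : t = 0) : a = 0 := by
  rcases e with h' | h'
  · exact h'
  · rcases q with h'' | h'' <;> linarith

lemma matsui_one_of_two {a t : ℝ} (e : a = 0 ∨ a = 1) (q : t - a = 0 ∨ t - a = 1)
    (h : t = 2) : a = 1 := by
  rcases e with h' | h'
  · rcases q with h'' | h'' <;> linarith
  · exact h'

lemma matsui_W_of_zero {a1 a2 a3 t : ℝ}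
    (e1 : a1 = 0 ∨ a1 = 1) (e2 : a2 = 0 ∨ a2 = 1) (e3 : a3 = 0 ∨ a3 = 1)
    (q1 : t - a1 = 0 ∨ t - a1 = 1) (q2 : t - a2 = 0 ∨ t - a2 = 1)
    (q3 : t - a3 = 0 ∨ t - a3 = 1) (h : t = 0) :
    matsuiZreal (matsuiRbit a1 + matsuiRbit a2 + matsuiRbit a3) = 0 := by
  rw [matsuiRbit_zero (matsui_zero_of_zero e1 q1 h),
    matsuiRbit_zero (matsui_zero_of_zero e2 q2 h),
    matsuiRbit_zero (matsui_zero_of_zero e3 q3 h),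
    show (0 + 0 + 0 : ZMod 2) = 0 by decide, matsuiZreal_zero]

lemma matsui_W_of_two {a1 a2 a3 t : ℝ}
    (e1 : a1 = 0 ∨ a1 = 1) (e2 : a2 = 0 ∨ a2 = 1) (e3 : a3 = 0 ∨ a3 = 1)
    (q1 : t - a1 = 0 ∨ t - a1 = 1) (q2 : t - a2 = 0 ∨ t - a2 = 1)
    (q3 : t - a3 = 0 ∨ t - a3 = 1) (h : t = 2) :
    matsuiZreal (matsuiRbit a1 + matsuiRbit a2 + matsuiRbit a3) = 1 := by
  rw [matsuiRbit_one (matsui_one_of_two e1 q1 h),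
    matsuiRbit_one (matsui_one_of_two e2 q2 h),
    matsuiRbit_one (matsui_one_of_two e3 q3 h),
    show (1 + 1 + 1 : ZMod 2) = 1 by decide, matsuiZreal_one]

lemma matsui_rbit_flip {a b : ℝ} (ea : a = 0 ∨ a = 1) (hab : a + b = 1) :
    matsuiRbit b = matsuiRbit a + 1 := by
  rcases ea with h | h
  · rw [matsuiRbit_zero h, matsuiRbit_one (by linarith)]; decide
  · rw [matsuiRbit_one h, matsuiRbit_zero (by linarith)]; decide

lemma matsui_W_xor {a1 a2 a3 b1 b2 b3 : ℝ}
    (h1 : matsuiRbit b1 = matsuiRbit a1 + 1)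
    (h2 : matsuiRbit b2 = matsuiRbit a2 + 1)
    (h3 : matsuiRbit b3 = matsuiRbit a3 + 1) :
    matsuiZreal (matsuiRbit a1 + matsuiRbit a2 + matsuiRbit a3) +
      matsuiZreal (matsuiRbit b1 + matsuiRbit b2 + matsuiRbit b3) = 1 := by
  rw [h1, h2, h3,
    show ∀ x y z : ZMod 2, (x + 1) + (y + 1) + (z + 1) = (x + y + z) + 1 from by decide]
  have hs : matsuiRbit a1 + matsuiRbit a2 + matsuiRbit a3 = 0 ∨
      matsuiRbit a1 + matsuiRbit a2 + matsuiRbit a3 = 1 := by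
    generalize matsuiRbit a1 + matsuiRbit a2 + matsuiRbit a3 = c
    revert c; decide
  rcases hs with h | h <;> rw [h]
  · rw [show (0 + 1 : ZMod 2) = 1 by decide, matsuiZreal_zero, matsuiZreal_one]; norm_num
  · rw [show (1 + 1 : ZMod 2) = 0 by decide, matsuiZreal_zero, matsuiZreal_one]; norm_num

/-- The vertex lemma: `t - XOR` is again a 0/1 value. -/
lemma matsui_vertex {a1 a2 a3 t : ℝ}
    (e1 : a1 = 0 ∨ a1 = 1) (e2 : a2 = 0 ∨ a2 = 1) (e3 : a3 = 0 ∨ a3 = 1)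
    (q1 : t - a1 = 0 ∨ t - a1 = 1) (q2 : t - a2 = 0 ∨ t - a2 = 1)
    (q3 : t - a3 = 0 ∨ t - a3 = 1) :
    t - matsuiZreal (matsuiRbit a1 + matsuiRbit a2 + matsuiRbit a3) = 0 ∨
    t - matsuiZreal (matsuiRbit a1 + matsuiRbit a2 + matsuiRbit a3) = 1 := by
  rcases matsui_tval e1 q1 with h | h | h
  · rw [matsui_W_of_zero e1 e2 e3 q1 q2 q3 h]; left; linarith
  · rcases matsuiZreal_cases (matsuiRbit a1 + matsuiRbit a2 + matsuiRbit a3) with h' | h' <;>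
      rw [h']
    · right; linarith
    · left; linarith
  · rw [matsui_W_of_two e1 e2 e3 q1 q2 q3 h]; right; linarith

/-- The edge lemma: the XOR vector and its complement satisfy the edge constraints. -/
lemma matsui_edge {a1 a2 a3 b1 b2 b3 tu tv : ℝ}
    (ea1 : a1 = 0 ∨ a1 = 1) (ea2 : a2 = 0 ∨ a2 = 1) (ea3 : a3 = 0 ∨ a3 = 1)
    (eb1 : b1 = 0 ∨ b1 = 1) (eb2 : b2 = 0 ∨ b2 = 1) (eb3 : b3 = 0 ∨ b3 = 1)
    (qa1 : tu - a1 = 0 ∨ tu - a1 = 1) (qa2 : tu - a2 = 0 ∨ tu - a2 = 1)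
    (qa3 : tu - a3 = 0 ∨ tu - a3 = 1)
    (qb1 : tv - b1 = 0 ∨ tv - b1 = 1) (qb2 : tv - b2 = 0 ∨ tv - b2 = 1)
    (qb3 : tv - b3 = 0 ∨ tv - b3 = 1)
    (s1 : a1 + b1 ≤ 1) (s2 : a2 + b2 ≤ 1) (s3 : a3 + b3 ≤ 1)
    (s1' : (tu - a1) + (tv - b1) ≤ 1) (s2' : (tu - a2) + (tv - b2) ≤ 1)
    (s3' : (tu - a3) + (tv - b3) ≤ 1) :
    matsuiZreal (matsuiRbit a1 + matsuiRbit a2 + matsuiRbit a3) +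
      matsuiZreal (matsuiRbit b1 + matsuiRbit b2 + matsuiRbit b3) ≤ 1 ∧
    (tu - matsuiZreal (matsuiRbit a1 + matsuiRbit a2 + matsuiRbit a3)) +
      (tv - matsuiZreal (matsuiRbit b1 + matsuiRbit b2 + matsuiRbit b3)) ≤ 1 := by
  have hWu01 := matsuiZreal_cases (matsuiRbit a1 + matsuiRbit a2 + matsuiRbit a3)
  have hWv01 := matsuiZreal_cases (matsuiRbit b1 + matsuiRbit b2 + matsuiRbit b3)
  rcases matsui_tval ea1 qa1 with htu | htu | htu
  · -- tu = 0
    have hWu := matsui_W_of_zero ea1 ea2 ea3 qa1 qa2 qa3 htu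
    rcases matsui_tval eb1 qb1 with htv | htv | htv
    · have hWv := matsui_W_of_zero eb1 eb2 eb3 qb1 qb2 qb3 htv
      constructor <;> linarith
    · rcases hWv01 with h | h <;> (constructor <;> linarith)
    · have hWv := matsui_W_of_two eb1 eb2 eb3 qb1 qb2 qb3 htv
      constructor <;> linarith
  · -- tu = 1
    rcases matsui_tval eb1 qb1 with htv | htv | htv
    · have hWv := matsui_W_of_zero eb1 eb2 eb3 qb1 qb2 qb3 htv
      rcases hWu01 with h | h <;> (constructor <;> linarith)
    · -- tu = tv = 1 : the XOR case
      have hab1 : a1 + b1 = 1 := by linarith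
      have hab2 : a2 + b2 = 1 := by linarith
      have hab3 : a3 + b3 = 1 := by linarith
      have hx := matsui_W_xor (matsui_rbit_flip ea1 hab1) (matsui_rbit_flip ea2 hab2)
        (matsui_rbit_flip ea3 hab3)
      constructor <;> linarith
    · -- tu = 1, tv = 2 : impossible
      exfalso
      have hb1 : b1 = 1 := matsui_one_of_two eb1 qb1 htv
      have ha1 : a1 = 0 := by rcases ea1 with h | h <;> linarith
      linarith
  · -- tu = 2
    have ha1 : a1 = 1 := matsui_one_of_two ea1 qa1 htu
    have hWu := matsui_W_of_two ea1 ea2 ea3 qa1 qa2 qa3 htu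
    rcases matsui_tval eb1 qb1 with htv | htv | htv
    · have hWv := matsui_W_of_zero eb1 eb2 eb3 qb1 qb2 qb3 htv
      constructor <;> linarith
    · exfalso
      have hb1 : b1 = 0 := by rcases eb1 with h | h <;> linarith
      linarith
    · exfalso
      have hb1 : b1 = 1 := matsui_one_of_two eb1 qb1 htv
      linarith

/-- The triple closure lemma: the pointwise XOR of three stable vectors (each of whose
complements with respect to `s` is also stable) is again such a vector. -/
lemma matsui_triple {V : Type*} (E : Finset (V × V))
    (St : Set (V → ℝ))
    (hSt : St = {x | (∀ v, x v = 0 ∨ x v = 1) ∧ ∀ p ∈ E, x p.1 + x p.2 ≤ 1})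
    (s x1 x2 x3 : V → ℝ)
    (h1 : x1 ∈ St) (h1' : s - x1 ∈ St)
    (h2 : x2 ∈ St) (h2' : s - x2 ∈ St)
    (h3 : x3 ∈ St) (h3' : s - x3 ∈ St) :
    (fun v => matsuiZreal (matsuiRbit (x1 v) + matsuiRbit (x2 v) + matsuiRbit (x3 v))) ∈ St ∧
    s - (fun v => matsuiZreal (matsuiRbit (x1 v) + matsuiRbit (x2 v) + matsuiRbit (x3 v)))
      ∈ St := by
  subst hSt
  obtain ⟨h1a, h1b⟩ := h1
  obtain ⟨h1a', h1b'⟩ := h1'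
  obtain ⟨h2a, h2b⟩ := h2
  obtain ⟨h2a', h2b'⟩ := h2'
  obtain ⟨h3a, h3b⟩ := h3
  obtain ⟨h3a', h3b'⟩ := h3'
  have q1 : ∀ v, s v - x1 v = 0 ∨ s v - x1 v = 1 := fun v => by simpa using h1a' v
  have q2 : ∀ v, s v - x2 v = 0 ∨ s v - x2 v = 1 := fun v => by simpa using h2a' v
  have q3 : ∀ v, s v - x3 v = 0 ∨ s v - x3 v = 1 := fun v => by simpa using h3a' v
  have qe1 : ∀ p ∈ E, (s p.1 - x1 p.1) + (s p.2 - x1 p.2) ≤ 1 := fun p hp => by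
    simpa using h1b' p hp
  have qe2 : ∀ p ∈ E, (s p.1 - x2 p.1) + (s p.2 - x2 p.2) ≤ 1 := fun p hp => by
    simpa using h2b' p hp
  have qe3 : ∀ p ∈ E, (s p.1 - x3 p.1) + (s p.2 - x3 p.2) ≤ 1 := fun p hp => by
    simpa using h3b' p hp
  refine ⟨⟨fun v => matsuiZreal_cases _, fun p hp => ?_⟩, ⟨fun v => ?_, fun p hp => ?_⟩⟩
  · exact (matsui_edge (h1a p.1) (h2a p.1) (h3a p.1) (h1a p.2) (h2a p.2) (h3a p.2)
      (q1 p.1) (q2 p.1) (q3 p.1) (q1 p.2) (q2 p.2) (q3 p.2)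
      (h1b p hp) (h2b p hp) (h3b p hp) (qe1 p hp) (qe2 p hp) (qe3 p hp)).1
  · simpa using matsui_vertex (h1a v) (h2a v) (h3a v) (q1 v) (q2 v) (q3 v)
  · simpa using (matsui_edge (h1a p.1) (h2a p.1) (h3a p.1) (h1a p.2) (h2a p.2) (h3a p.2)
      (q1 p.1) (q2 p.1) (q3 p.1) (q1 p.2) (q2 p.2) (q3 p.2)
      (h1b p hp) (h2b p hp) (h3b p hp) (qe1 p hp) (qe2 p hp) (qe3 p hp)).2

/-- Let `G = (V, E)` be a graph and `H = {y⁰, ȳ⁰, …, y^{2k}, ȳ^{2k}} ⊆ Stable(G)` a set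
of `2(2k+1)` distinct 0/1-vectors, `k ≥ 1`, with `yⁱ + ȳⁱ = y⁰ + ȳ⁰` for all `i`. Then
there exist `y*, ȳ* ∈ Stable(G) \ H` with `y* + ȳ* = y⁰ + ȳ⁰`; consequently `H` is not
the vertex set of a face of the stable set polytope `conv(Stable(G))`. -/
theorem matsui_face_not_stable
    {V : Type*} [Fintype V] [DecidableEq V] (E : Finset (V × V))
    (k : ℕ) (hk : 1 ≤ k)
    (Stable : Set (V → ℝ))
    (hStable : Stable = {x | (∀ v, x v = 0 ∨ x v = 1) ∧ ∀ p ∈ E, x p.1 + x p.2 ≤ 1})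
    (y ybar : Fin (2 * k + 1) → V → ℝ)
    (hy : ∀ i, y i ∈ Stable) (hybar : ∀ i, ybar i ∈ Stable)
    (hinj : Function.Injective
      (Sum.elim y ybar : Fin (2 * k + 1) ⊕ Fin (2 * k + 1) → V → ℝ))
    (hsum : ∀ i, y i + ybar i = y 0 + ybar 0)
    (H : Set (V → ℝ)) (hH : H = Set.range y ∪ Set.range ybar) :
    (∃ ys ybs : V → ℝ, ys ∈ Stable \ H ∧ ybs ∈ Stable \ H ∧
      ys + ybs = y 0 + ybar 0) ∧
    ¬ ∃ (a : V → ℝ) (b : ℝ),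
        (∀ p ∈ convexHull ℝ Stable, ∑ v, a v * p v ≤ b) ∧
        {x ∈ Stable | ∑ v, a v * x v = b} = H := by
  classical
  set s : V → ℝ := y 0 + ybar 0 with hs
  have hsub : ∀ i, s - y i = ybar i := by
    intro i; rw [← hsum i]; exact add_sub_cancel_left _ _
  have hsub' : ∀ i, s - ybar i = y i := by
    intro i; rw [← hsum i]; exact add_sub_cancel_right _ _
  have h01 : ∀ x ∈ Stable, ∀ v, x v = 0 ∨ x v = 1 := by
    intro x hx; rw [hStable] at hx; exact hx.1
  -- translation maps
  set L : (V → ZMod 2) → (V → ℝ) :=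
    fun z v => matsuiZreal (z v + matsuiRbit (y 0 v)) with hL
  set enc : (V → ℝ) → (V → ZMod 2) :=
    fun x v => matsuiRbit (x v) + matsuiRbit (y 0 v) with henc
  have haddself : ∀ a : ZMod 2, a + a = 0 := by decide
  have hL_enc : ∀ x : V → ℝ, (∀ v, x v = 0 ∨ x v = 1) → L (enc x) = x := by
    intro x hx; funext v
    show matsuiZreal ((matsuiRbit (x v) + matsuiRbit (y 0 v)) + matsuiRbit (y 0 v)) = x v
    rw [add_assoc, haddself, add_zero]
    exact matsuiZreal_rbit (hx v)
  have henc_L : ∀ z : V → ZMod 2, enc (L z) = z := by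
    intro z; funext v
    show matsuiRbit (matsuiZreal (z v + matsuiRbit (y 0 v))) + matsuiRbit (y 0 v) = z v
    rw [matsuiRbit_zreal, add_assoc, haddself, add_zero]
  have hL0 : L 0 = y 0 := by
    funext v
    show matsuiZreal ((0 : ZMod 2) + matsuiRbit (y 0 v)) = y 0 v
    rw [zero_add]; exact matsuiZreal_rbit (h01 _ (hy 0) v)
  -- the subgroup
  set G : AddSubgroup (V → ZMod 2) :=
    { carrier := {z | L z ∈ Stable ∧ s - L z ∈ Stable}
      zero_mem' := by
        refine ⟨?_, ?_⟩
        · rw [hL0]; exact hy 0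
        · rw [hL0, hsub 0]; exact hybar 0
      add_mem' := by
        intro z1 z2 hz1 hz2
        obtain ⟨m1, m1'⟩ := hz1
        obtain ⟨m2, m2'⟩ := hz2
        have m3 : y 0 ∈ Stable := hy 0
        have m3' : s - y 0 ∈ Stable := by rw [hsub 0]; exact hybar 0
        have htr := matsui_triple E Stable hStable s (L z1) (L z2) (y 0)
          m1 m1' m2 m2' m3 m3'
        have heq : (fun v => matsuiZreal
            (matsuiRbit (L z1 v) + matsuiRbit (L z2 v) + matsuiRbit (y 0 v)))
            = L (z1 + z2) := by
          funext v
          have hb1 : matsuiRbit (L z1 v) = z1 v + matsuiRbit (y 0 v) := matsuiRbit_zreal _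
          have hb2 : matsuiRbit (L z2 v) = z2 v + matsuiRbit (y 0 v) := matsuiRbit_zreal _
          show matsuiZreal (matsuiRbit (L z1 v) + matsuiRbit (L z2 v) + matsuiRbit (y 0 v))
            = matsuiZreal ((z1 v + z2 v) + matsuiRbit (y 0 v))
          rw [hb1, hb2,
            show ∀ a b c : ZMod 2, (a + c) + (b + c) + c = (a + b) + c from by decide]
        rw [heq] at htr
        exact htr
      neg_mem' := by
        intro z hz
        have : -z = z := by
          funext v
          show -(z v) = z v
          revert hz
          intro _
          exact (by decide : ∀ a : ZMod 2, -a = a) (z v)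
        rw [this]
        exact hz } with hG
  -- the injection from the given family into G
  have hmemf : ∀ i : Fin (2 * k + 1) ⊕ Fin (2 * k + 1),
      enc (Sum.elim y ybar i) ∈ G := by
    intro i
    have hst : Sum.elim y ybar i ∈ Stable := by cases i with
      | inl j => exact hy j
      | inr j => exact hybar j
    have hst' : s - Sum.elim y ybar i ∈ Stable := by cases i with
      | inl j => rw [Sum.elim_inl, hsub j]; exact hybar j
      | inr j => rw [Sum.elim_inr, hsub' j]; exact hy j
    refine ⟨?_, ?_⟩ <;> rw [hL_enc _ (h01 _ hst)]
    · exact hst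
    · exact hst'
  set f : Fin (2 * k + 1) ⊕ Fin (2 * k + 1) → G :=
    fun i => ⟨enc (Sum.elim y ybar i), hmemf i⟩ with hf
  have hf_inj : Function.Injective f := by
    intro i j hij
    apply hinj
    have h1 : enc (Sum.elim y ybar i) = enc (Sum.elim y ybar j) := congrArg Subtype.val hij
    have hsti : ∀ i : Fin (2 * k + 1) ⊕ Fin (2 * k + 1),
        ∀ v, Sum.elim y ybar i v = 0 ∨ Sum.elim y ybar i v = 1 := by
      intro i; cases i with
      | inl j => exact h01 _ (hy j)
      | inr j => exact h01 _ (hybar j)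
    calc Sum.elim y ybar i = L (enc (Sum.elim y ybar i)) := (hL_enc _ (hsti i)).symm
      _ = L (enc (Sum.elim y ybar j)) := by rw [h1]
      _ = Sum.elim y ybar j := hL_enc _ (hsti j)
  -- cardinality bounds
  have hdvd : Nat.card G ∣ Nat.card (V → ZMod 2) := AddSubgroup.card_addSubgroup_dvd_card G
  have hcard_amb : Nat.card (V → ZMod 2) = 2 ^ Fintype.card V := by
    rw [Nat.card_eq_fintype_card, Fintype.card_fun, ZMod.card]
  obtain ⟨d, hd_le, hd⟩ := (Nat.dvd_prime_pow Nat.prime_two).1 (hcard_amb ▸ hdvd)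
  have hcs : Nat.card (Fin (2 * k + 1) ⊕ Fin (2 * k + 1)) = 2 * (2 * k + 1) := by
    rw [Nat.card_sum]
    simp only [Nat.card_eq_fintype_card, Fintype.card_fin]
    ring
  have hle : 2 * (2 * k + 1) ≤ Nat.card G := by
    have := Nat.card_le_card_of_injective f hf_inj
    rwa [hcs] at this
  have hne : 2 * (2 * k + 1) ≠ Nat.card G := by
    rw [hd]
    intro hcontra
    rcases d with _ | d
    · rw [pow_zero] at hcontra; omega
    · rw [pow_succ] at hcontra
      have hkd : 2 * k + 1 = 2 ^ d := by omega
      rcases d with _ | e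
      · rw [pow_zero] at hkd; omega
      · obtain ⟨t, ht⟩ : 2 ∣ 2 ^ (e + 1) := dvd_pow_self 2 (Nat.succ_ne_zero e)
        rw [ht] at hkd; omega
  have hnsurj : ¬ Function.Surjective f := by
    intro hsurj
    have := Nat.card_le_card_of_surjective f hsurj
    rw [hcs] at this
    omega
  obtain ⟨g, hg⟩ : ∃ g : G, ∀ i, f i ≠ g := by
    by_contra hcon
    push_neg at hcon
    exact hnsurj fun g => hcon g
  -- the new pair
  set ys : V → ℝ := L g.1 with hys
  set ybs : V → ℝ := s - ys with hybs
  have hys_mem : ys ∈ Stable := g.2.1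
  have hybs_mem : ybs ∈ Stable := g.2.2
  have hys_notH : ys ∉ H := by
    rw [hH]
    rintro (⟨j, hj⟩ | ⟨j, hj⟩)
    · apply hg (Sum.inl j)
      apply Subtype.ext
      show enc (Sum.elim y ybar (Sum.inl j)) = g.1
      rw [Sum.elim_inl, hj, hys]
      exact henc_L _
    · apply hg (Sum.inr j)
      apply Subtype.ext
      show enc (Sum.elim y ybar (Sum.inr j)) = g.1
      rw [Sum.elim_inr, hj, hys]
      exact henc_L _
  have hybs_notH : ybs ∉ H := by
    rw [hH]
    rintro (⟨j, hj⟩ | ⟨j, hj⟩)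
    · apply hys_notH
      rw [hH]
      right
      exact ⟨j, by rw [← hsub j, hj, hybs, sub_sub_cancel]⟩
    · apply hys_notH
      rw [hH]
      left
      exact ⟨j, by rw [← hsub' j, hj, hybs, sub_sub_cancel]⟩
  have hpair : ys + ybs = y 0 + ybar 0 := by
    rw [hybs, add_sub_cancel, hs]
  constructor
  · exact ⟨ys, ybs, ⟨hys_mem, hys_notH⟩, ⟨hybs_mem, hybs_notH⟩, hpair⟩
  · rintro ⟨a, b, hab, hface⟩
    have hy0_face : y 0 ∈ {x ∈ Stable | ∑ v, a v * x v = b} := by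
      rw [hface, hH]; exact Or.inl ⟨0, rfl⟩
    have hyb0_face : ybar 0 ∈ {x ∈ Stable | ∑ v, a v * x v = b} := by
      rw [hface, hH]; exact Or.inr ⟨0, rfl⟩
    have hys_le : ∑ v, a v * ys v ≤ b := hab _ (subset_convexHull ℝ Stable hys_mem)
    have hybs_le : ∑ v, a v * ybs v ≤ b := hab _ (subset_convexHull ℝ Stable hybs_mem)
    have hsum2 : ∑ v, a v * ys v + ∑ v, a v * ybs v = 2 * b := by
      have hpt : ∀ v, ys v + ybs v = y 0 v + ybar 0 v := fun v => by
        have := congrFun hpair v; simpa using this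
      calc ∑ v, a v * ys v + ∑ v, a v * ybs v
          = ∑ v, (a v * ys v + a v * ybs v) := by rw [Finset.sum_add_distrib]
        _ = ∑ v, (a v * y 0 v + a v * ybar 0 v) := by
            apply Finset.sum_congr rfl
            intro v _
            rw [← mul_add, ← mul_add, hpt v]
        _ = ∑ v, a v * y 0 v + ∑ v, a v * ybar 0 v := by rw [Finset.sum_add_distrib]
        _ = b + b := by rw [hy0_face.2, hyb0_face.2]
        _ = 2 * b := by ring
    have hys_eq : ∑ v, a v * ys v = b := by linarith
    apply hys_notH
    rw [← hface]
    exact ⟨hys_mem, hys_eq⟩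
end
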